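/- Let L be a bounded lattice, X = D♭(L), φ ∈ MPE(X,2) and a ∈ L. Then (i) if φ⁻¹(0) ∩ W_a = ∅ then φ⁻¹(0) ⊆ V_a, and (ii) if φ⁻¹(1) ∩ V_a = ∅ then φ⁻¹(1) ⊆ W_a. -/

import Mathlib

/-!
For a maximal partial homomorphism `f`, the preimages `f⁻¹(1)` and `f⁻¹(0)` are a filter and
an ideal (their up- and down-closures define an extension of `f`); conversely every maximal
disjoint filter–ideal pair is the pair of preimages of a maximal partial homomorphism.
So if `f(a) ≠ 0`, extending the disjoint pair `(↑a, f⁻¹(0))` by Zorn's lemma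
gives an MPH `g` with `g(a) = 1` and `f⁻¹(0) ⊆ g⁻¹(0)`, and this inclusion makes `g`, and every
`E`-predecessor of `g`, an `E`-predecessor of `f`. Now let `φ(f) = 0`. Then `φ(g) = 1` is ruled
out by `E g f`, and if `φ(g)` were undefined, maximality of `φ` would give a predecessor of `g`,
hence of `f`, with value `1`. So `φ(g) = 0` and `g ∈ φ⁻¹(0) ∩ W_a`. Part (ii) is dual.
-/

namespace CanExt

open Classical

/-- A partial map from `X` into the two-element chain `{0,1}` (encoded as `Bool`,
with `false` playing the role of `0` and `true` the role of `1`);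
`φ x = none` means `x` is outside the domain of `φ`. -/
abbrev PMap (X : Type*) := X → Option Bool

/-- The preimage of `1` of a partial map. -/
def pre1 {X : Type*} (φ : PMap X) : Set X := {x | φ x = some true}

/-- The preimage of `0` of a partial map. -/
def pre0 {X : Type*} (φ : PMap X) : Set X := {x | φ x = some false}

/-- A partial map is `E`-preserving if whenever `x, y` lie in its domain and
`(x,y) ∈ E`, then `φ x ≤ φ y`. -/
def EPres {X : Type*} (E : X → X → Prop) (φ : PMap X) : Prop :=
  ∀ ⦃x y : X⦄, E x y → ∀ ⦃a b : Bool⦄, φ x = some a → φ y = some b → a ≤ b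

/-- `PExt ψ φ` : the partial map `ψ` extends the partial map `φ`. -/
def PExt {X : Type*} (ψ φ : PMap X) : Prop :=
  ∀ ⦃x : X⦄ ⦃a : Bool⦄, φ x = some a → ψ x = some a

/-- The set of maximal partial `E`-preserving maps from `(X,E)` into the
two-element chain `2`. -/
def MPE {X : Type*} (E : X → X → Prop) : Set (PMap X) :=
  {φ | EPres E φ ∧ ∀ ψ : PMap X, EPres E ψ → PExt ψ φ → ψ = φ}

/-- A partial morphism from a graph with topology `(X,E,t)` to `2_τ`:
the preimages of `1` and `0` are `t`-closed (equivalently, the domain is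
closed and the restriction to the domain is continuous into discrete `2`),
and the map is `E`-preserving. -/
def PMorphT {X : Type*} (E : X → X → Prop) (t : TopologicalSpace X) (φ : PMap X) : Prop :=
  EPres E φ ∧ @IsClosed X t (pre1 φ) ∧ @IsClosed X t (pre0 φ)

/-- The set of maximal partial morphisms from `(X,E,t)` to `2_τ`. -/
def MPM {X : Type*} (E : X → X → Prop) (t : TopologicalSpace X) : Set (PMap X) :=
  {φ | PMorphT E t φ ∧ ∀ ψ : PMap X, PMorphT E t ψ → PExt ψ φ → ψ = φ}

/-- The relation `E` between partial maps on a lattice `L`: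
`(f,g) ∈ E` iff `f x ≤ g x` for all `x ∈ dom f ∩ dom g`. -/
def ErelP {L : Type*} (f g : PMap L) : Prop :=
  ∀ ⦃x : L⦄ ⦃a b : Bool⦄, f x = some a → g x = some b → a ≤ b

/-- `f ≤₁ g` iff `f⁻¹(1) ⊆ g⁻¹(1)`. -/
def le1 {L : Type*} (f g : PMap L) : Prop := pre1 f ⊆ pre1 g

/-- `f ≤₂ g` iff `f⁻¹(0) ⊆ g⁻¹(0)`. -/
def le2 {L : Type*} (f g : PMap L) : Prop := pre0 f ⊆ pre0 g

section Lat

variable (L : Type*) [Lattice L] [BoundedOrder L]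

/-- A partial homomorphism from a bounded lattice `L` to the two-element
bounded lattice `2_B`: its domain is a `{0,1}`-sublattice of `L` and the
restriction to the domain is a bounded-lattice homomorphism. -/
def PHom (f : PMap L) : Prop :=
  f ⊥ = some false ∧ f ⊤ = some true ∧
  ∀ ⦃a b : L⦄ ⦃x y : Bool⦄, f a = some x → f b = some y →
    f (a ⊓ b) = some (x ⊓ y) ∧ f (a ⊔ b) = some (x ⊔ y)

/-- The set of maximal partial homomorphisms (MPHs) from `L` to `2_B`. -/
def MPHset : Set (PMap L) := {f | PHom L f ∧ ∀ g : PMap L, PHom L g → PExt g f → g = f}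

/-- The underlying set of the graph `D♭(L)`. -/
abbrev MPHsub := {f : PMap L // f ∈ MPHset L}

/-- The relation `E` on `MPH(L, 2_B)`, giving the graph `D♭(L)`. -/
def EM (f g : MPHsub L) : Prop := ErelP f.1 g.1

/-- The evaluation map `e_a` on `MPH(L,2_B)` : `e_a(f) = f(a)` if `a ∈ dom f`. -/
def evalM (a : L) : PMap (MPHsub L) := fun f => f.1 a

/-- `V_a = {f ∈ MPH(L,2_B) : f(a) = 0}`. -/
def VaM (a : L) : Set (MPHsub L) := {f | f.1 a = some false}

/-- `W_a = {f ∈ MPH(L,2_B) : f(a) = 1}`. -/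
def WaM (a : L) : Set (MPHsub L) := {f | f.1 a = some true}

/-- The topology on `MPH(L,2_B)` with the sets `V_a`, `W_a` as a subbasis of
closed sets. -/
def tauM : TopologicalSpace (MPHsub L) :=
  TopologicalSpace.generateFrom {U | ∃ a : L, U = (VaM L a)ᶜ ∨ U = (WaM L a)ᶜ}

/-- A (nonempty) lattice filter. -/
def IsLatFilter (F : Set L) : Prop :=
  F.Nonempty ∧ (∀ ⦃a b : L⦄, a ∈ F → a ≤ b → b ∈ F) ∧
    (∀ ⦃a b : L⦄, a ∈ F → b ∈ F → a ⊓ b ∈ F)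

/-- A (nonempty) lattice ideal. -/
def IsLatIdeal (I : Set L) : Prop :=
  I.Nonempty ∧ (∀ ⦃a b : L⦄, a ∈ I → b ≤ a → b ∈ I) ∧
    (∀ ⦃a b : L⦄, a ∈ I → b ∈ I → a ⊔ b ∈ I)

/-- The set of special partial homomorphisms (SPHs) from `L` to `2_B`:
`f⁻¹(1)` is a nonempty filter, `f⁻¹(0)` is a nonempty ideal, and they are
disjoint. -/
def SPHset : Set (PMap L) :=
  {f | IsLatFilter L (pre1 f) ∧ IsLatIdeal L (pre0 f) ∧ Disjoint (pre1 f) (pre0 f)}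

/-- The underlying set of the graph `D̄♭(L)`. -/
abbrev SPHsub := {f : PMap L // f ∈ SPHset L}

/-- The relation `E` on `SPH(L, 2_B)`, giving the graph `D̄♭(L)`. -/
def ES (f g : SPHsub L) : Prop := ErelP f.1 g.1

/-- The evaluation map `ē_a` on `SPH(L,2_B)`. -/
def evalS (a : L) : PMap (SPHsub L) := fun f => f.1 a

/-- `V_a = {f ∈ SPH(L,2_B) : f(a) = 0}`. -/
def VaS (a : L) : Set (SPHsub L) := {f | f.1 a = some false}

/-- `W_a = {f ∈ SPH(L,2_B) : f(a) = 1}`. -/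
def WaS (a : L) : Set (SPHsub L) := {f | f.1 a = some true}

/-- The topology on `SPH(L,2_B)` with the sets `V_a`, `W_a` as a subbasis of
closed sets. -/
def tauS : TopologicalSpace (SPHsub L) :=
  TopologicalSpace.generateFrom {U | ∃ a : L, U = (VaS L a)ᶜ ∨ U = (WaS L a)ᶜ}

/-- The carrier of the completion built from `D♭(L)`. -/
abbrev CX := {φ : PMap (MPHsub L) // φ ∈ MPE (EM L)}

/-- The carrier of the completion built from `D̄♭(L)`. -/
abbrev CY := {φ : PMap (SPHsub L) // φ ∈ MPE (ES L)}

end Lat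

section PartialMap

variable {X : Type*} {E : X → X → Prop} {φ : PMap X}

theorem MPE.not_ePres_update (hφ : φ ∈ MPE E) {x : X} (hx : φ x = none) (b : Bool) :
    ¬ EPres E (Function.update φ x (some b)) := by
  intro h
  have hext : PExt (Function.update φ x (some b)) φ := by
    intro y c hy
    rcases eq_or_ne y x with rfl | hyx
    · simp [hx] at hy
    · rwa [Function.update_of_ne hyx]
  simpa [hx] using congrFun (hφ.2 _ h hext) x

theorem MPE.exists_true_of_eq_none (hφ : φ ∈ MPE E) {x : X} (hx : φ x = none) :
    ∃ z, φ z = some true ∧ E z x := by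
  have h := MPE.not_ePres_update hφ hx false
  simp only [EPres, not_forall] at h
  obtain ⟨y, z, hyz, p, q, hy, hz, hpq⟩ := h
  obtain ⟨rfl, rfl⟩ : p = true ∧ q = false := by revert hpq; cases p <;> cases q <;> decide
  have hyx : y ≠ x := by rintro rfl; simp at hy
  rw [Function.update_of_ne hyx] at hy
  rcases eq_or_ne z x with rfl | hzx
  · exact ⟨y, hy, hyz⟩
  · rw [Function.update_of_ne hzx] at hz
    exact absurd (hφ.1 hyz hy hz) (by decide)

theorem MPE.exists_false_of_eq_none (hφ : φ ∈ MPE E) {x : X} (hx : φ x = none) :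
    ∃ z, φ z = some false ∧ E x z := by
  have h := MPE.not_ePres_update hφ hx true
  simp only [EPres, not_forall] at h
  obtain ⟨y, z, hyz, p, q, hy, hz, hpq⟩ := h
  obtain ⟨rfl, rfl⟩ : p = true ∧ q = false := by revert hpq; cases p <;> cases q <;> decide
  have hzx : z ≠ x := by rintro rfl; simp at hz
  rw [Function.update_of_ne hzx] at hz
  rcases eq_or_ne y x with rfl | hyx
  · exact ⟨z, hz, hyz⟩
  · rw [Function.update_of_ne hyx] at hy
    exact absurd (hφ.1 hyz hy hz) (by decide)

theorem MPE.eq_false_of_forall_rel (hφ : φ ∈ MPE E) {x y : X} (hy : φ y = some false)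
    (hxy : E x y) (h : ∀ z, E z x → E z y) : φ x = some false := by
  cases hx : φ x with
  | none =>
    obtain ⟨z, hz, hzx⟩ := MPE.exists_true_of_eq_none hφ hx
    exact absurd (hφ.1 (h z hzx) hz hy) (by decide)
  | some b =>
    have := hφ.1 hxy hx hy
    cases b
    · rfl
    · exact absurd this (by decide)

theorem MPE.eq_true_of_forall_rel (hφ : φ ∈ MPE E) {x y : X} (hx : φ x = some true)
    (hxy : E x y) (h : ∀ z, E y z → E x z) : φ y = some true := by
  cases hy : φ y with
  | none =>
    obtain ⟨z, hz, hyz⟩ := MPE.exists_false_of_eq_none hφ hy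
    exact absurd (hφ.1 (h z hyz) hx hz) (by decide)
  | some b =>
    have := hφ.1 hxy hx hy
    cases b
    · exact absurd this (by decide)
    · rfl

theorem ErelP.refl (f : PMap X) : ErelP f f :=
  fun _ _ _ h₁ h₂ => le_of_eq (Option.some.inj (h₁.symm.trans h₂))

theorem ErelP.of_le2 {f g z : PMap X} (hz : ErelP z g) (h : le2 f g) : ErelP z f := by
  intro x p q hzx hfx
  cases q
  · exact hz hzx (h hfx)
  · exact Bool.le_true p

theorem ErelP.of_le1 {f g z : PMap X} (hz : ErelP g z) (h : le1 f g) : ErelP f z := by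
  intro x p q hfx hzx
  cases p
  · exact Bool.false_le q
  · exact hz (h hfx) hzx

noncomputable def pairMap (F I : Set X) : PMap X :=
  fun x => if x ∈ F then some true else if x ∈ I then some false else none

section PairMap

variable {F I : Set X} {x : X}

theorem pairMap_eq_true_iff : pairMap F I x = some true ↔ x ∈ F := by
  unfold pairMap
  split_ifs <;> simp_all

theorem pairMap_eq_false_iff (h : Disjoint F I) : pairMap F I x = some false ↔ x ∈ I := by
  by_cases hF : x ∈ F
  · simp [pairMap, hF, h.notMem_of_mem_left hF]
  · simp [pairMap, hF]

end PairMap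

end PartialMap

section Lattice

variable {L : Type*} [Lattice L]

theorem isLatFilter_Ici (a : L) : IsLatFilter L (Set.Ici a) :=
  ⟨⟨a, le_rfl⟩, fun _ _ h h' => h.trans h', fun _ _ => le_inf⟩

theorem isLatIdeal_Iic (a : L) : IsLatIdeal L (Set.Iic a) :=
  ⟨⟨a, le_rfl⟩, fun _ _ h h' => h'.trans h, fun _ _ => sup_le⟩

theorem isLatFilter_upperClosure {s : Set L} (hne : s.Nonempty)
    (hinf : ∀ ⦃a b⦄, a ∈ s → b ∈ s → a ⊓ b ∈ s) : IsLatFilter L (upperClosure s) := by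
  refine ⟨hne.mono subset_upperClosure, fun a b ha hab => (upperClosure s).upper hab ha, ?_⟩
  rintro a b ⟨u, hu, hua⟩ ⟨v, hv, hvb⟩
  exact ⟨u ⊓ v, hinf hu hv, inf_le_inf hua hvb⟩

theorem isLatIdeal_lowerClosure {s : Set L} (hne : s.Nonempty)
    (hsup : ∀ ⦃a b⦄, a ∈ s → b ∈ s → a ⊔ b ∈ s) : IsLatIdeal L (lowerClosure s) := by
  refine ⟨hne.mono subset_lowerClosure, fun a b ha hba => (lowerClosure s).lower hba ha, ?_⟩
  rintro a b ⟨u, hu, hau⟩ ⟨v, hv, hbv⟩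
  exact ⟨u ⊔ v, hsup hu hv, sup_le_sup hau hbv⟩

theorem isLatFilter_iUnion {ι : Type*} [Nonempty ι] {F : ι → Set L} (hdir : Directed (· ⊆ ·) F)
    (hF : ∀ i, IsLatFilter L (F i)) : IsLatFilter L (⋃ i, F i) := by
  refine ⟨?_, ?_, ?_⟩
  · obtain ⟨i⟩ := ‹Nonempty ι›
    exact (hF i).1.mono (Set.subset_iUnion F i)
  · intro a b ha hab
    obtain ⟨i, ha⟩ := Set.mem_iUnion.1 ha
    exact Set.mem_iUnion.2 ⟨i, (hF i).2.1 ha hab⟩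
  · intro a b ha hb
    obtain ⟨i, ha⟩ := Set.mem_iUnion.1 ha
    obtain ⟨j, hb⟩ := Set.mem_iUnion.1 hb
    obtain ⟨k, hik, hjk⟩ := hdir i j
    exact Set.mem_iUnion.2 ⟨k, (hF k).2.2 (hik ha) (hjk hb)⟩

theorem isLatIdeal_iUnion {ι : Type*} [Nonempty ι] {I : ι → Set L} (hdir : Directed (· ⊆ ·) I)
    (hI : ∀ i, IsLatIdeal L (I i)) : IsLatIdeal L (⋃ i, I i) := by
  refine ⟨?_, ?_, ?_⟩
  · obtain ⟨i⟩ := ‹Nonempty ι›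
    exact (hI i).1.mono (Set.subset_iUnion I i)
  · intro a b ha hba
    obtain ⟨i, ha⟩ := Set.mem_iUnion.1 ha
    exact Set.mem_iUnion.2 ⟨i, (hI i).2.1 ha hba⟩
  · intro a b ha hb
    obtain ⟨i, ha⟩ := Set.mem_iUnion.1 ha
    obtain ⟨j, hb⟩ := Set.mem_iUnion.1 hb
    obtain ⟨k, hik, hjk⟩ := hdir i j
    exact Set.mem_iUnion.2 ⟨k, (hI k).2.2 (hik ha) (hjk hb)⟩

structure IsSeparatingPair (F I : Set L) : Prop where
  filter : IsLatFilter L F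
  ideal : IsLatIdeal L I
  disjoint : Disjoint F I

theorem IsSeparatingPair.iUnion {ι : Type*} [Nonempty ι] {P : ι → Set L × Set L}
    (hdir : Directed (· ≤ ·) P) (hP : ∀ i, IsSeparatingPair (P i).1 (P i).2) :
    IsSeparatingPair (⋃ i, (P i).1) (⋃ i, (P i).2) := by
  refine ⟨isLatFilter_iUnion (hdir.mono_comp _ fun _ _ h => h.1) fun i => (hP i).filter,
    isLatIdeal_iUnion (hdir.mono_comp _ fun _ _ h => h.2) fun i => (hP i).ideal, ?_⟩
  refine Set.disjoint_left.2 fun x hF hI => ?_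
  obtain ⟨i, hi⟩ := Set.mem_iUnion.1 hF
  obtain ⟨j, hj⟩ := Set.mem_iUnion.1 hI
  obtain ⟨k, hik, hjk⟩ := hdir i j
  exact (hP k).disjoint.notMem_of_mem_left (hik.1 hi) (hjk.2 hj)

theorem IsSeparatingPair.exists_maximal {F I : Set L} (h : IsSeparatingPair F I) :
    ∃ G J, F ⊆ G ∧ I ⊆ J ∧ Maximal (fun p : Set L × Set L => IsSeparatingPair p.1 p.2) (G, J) := by
  obtain ⟨⟨G, J⟩, ⟨hFG, hIJ⟩, hmax⟩ :=
    zorn_le_nonempty₀ {p : Set L × Set L | IsSeparatingPair p.1 p.2} (fun c hc hchain p hp => by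
      have : Nonempty c := ⟨⟨p, hp⟩⟩
      refine ⟨(⋃ q : c, q.1.1, ⋃ q : c, q.1.2), ?_, fun q hq => ?_⟩
      · exact IsSeparatingPair.iUnion (hchain.directed (f := id)) fun q => hc q.2
      · exact ⟨Set.subset_iUnion (fun q : c => q.1.1) ⟨q, hq⟩,
          Set.subset_iUnion (fun q : c => q.1.2) ⟨q, hq⟩⟩) (F, I) h
  exact ⟨G, J, hFG, hIJ, hmax⟩

end Lattice

section BoundedLattice

variable {L : Type*} [Lattice L] [BoundedOrder L] {f : PMap L}

theorem IsSeparatingPair.pHom {F I : Set L} (h : IsSeparatingPair F I) :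
    PHom L (pairMap F I) := by
  obtain ⟨hF, hI, hd⟩ := h
  have htop : ⊤ ∈ F := hF.2.1 hF.1.some_mem le_top
  have hbot : ⊥ ∈ I := hI.2.1 hI.1.some_mem bot_le
  have h0 : ∀ {x}, x ∈ I → pairMap F I x = some false := (pairMap_eq_false_iff hd).2
  have h1 : ∀ {x}, x ∈ F → pairMap F I x = some true := pairMap_eq_true_iff.2
  refine ⟨h0 hbot, h1 htop, fun a b x y ha hb => ?_⟩
  cases x <;> cases y <;> simp only [pairMap_eq_true_iff, pairMap_eq_false_iff hd] at ha hb
  · exact ⟨h0 (hI.2.1 ha inf_le_left), h0 (hI.2.2 ha hb)⟩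
  · exact ⟨h0 (hI.2.1 ha inf_le_left), h1 (hF.2.1 hb le_sup_right)⟩
  · exact ⟨h0 (hI.2.1 hb inf_le_right), h1 (hF.2.1 ha le_sup_left)⟩
  · exact ⟨h1 (hF.2.2 ha hb), h1 (hF.2.1 ha le_sup_left)⟩

theorem PHom.isSeparatingPair_closure (hf : PHom L f) :
    IsSeparatingPair (upperClosure (pre1 f) : Set L) (lowerClosure (pre0 f)) := by
  refine ⟨isLatFilter_upperClosure ⟨⊤, hf.2.1⟩ fun a b ha hb => (hf.2.2 ha hb).1,
    isLatIdeal_lowerClosure ⟨⊥, hf.1⟩ fun a b ha hb => (hf.2.2 ha hb).2, ?_⟩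
  refine Set.disjoint_left.2 fun x ⟨u, hu, hux⟩ ⟨v, hv, hxv⟩ => ?_
  have h := (hf.2.2 hu hv).1
  rw [inf_eq_left.2 (hux.trans hxv), hu] at h
  exact absurd h (by decide)

/-- Maximal separating pairs give maximal partial homomorphisms: the closures of the preimages
of any extension form a separating pair containing `(F, I)`, hence equal to it. -/
theorem pairMap_mem_MPHset {F I : Set L}
    (h : Maximal (fun p : Set L × Set L => IsSeparatingPair p.1 p.2) (F, I)) :
    pairMap F I ∈ MPHset L := by
  have hd := h.prop.disjoint
  refine ⟨h.prop.pHom, fun g hg hext => ?_⟩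
  have hsub : (F, I) ≤ ((upperClosure (pre1 g) : Set L), (lowerClosure (pre0 g) : Set L)) :=
    ⟨fun x hx => subset_upperClosure (hext (pairMap_eq_true_iff.2 hx)),
      fun x hx => subset_lowerClosure (hext ((pairMap_eq_false_iff hd).2 hx))⟩
  obtain ⟨hF, hI⟩ := h.2 hg.isSeparatingPair_closure hsub
  funext x
  cases hgx : g x with
  | none =>
    cases hpx : pairMap F I x with
    | none => rfl
    | some b => rw [hext hpx] at hgx; cases hgx
  | some b =>
    cases b
    · exact ((pairMap_eq_false_iff hd).2 (hI (subset_lowerClosure hgx))).symm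
    · exact (pairMap_eq_true_iff.2 (hF (subset_upperClosure hgx))).symm

theorem MPHset.pairMap_closure_eq (hf : f ∈ MPHset L) :
    pairMap (upperClosure (pre1 f)) (lowerClosure (pre0 f)) = f := by
  have hsep := hf.1.isSeparatingPair_closure
  refine hf.2 _ hsep.pHom fun x b hb => ?_
  cases b
  · exact (pairMap_eq_false_iff hsep.disjoint).2 (subset_lowerClosure hb)
  · exact pairMap_eq_true_iff.2 (subset_upperClosure hb)

theorem MPHset.isLowerSet_pre0 (hf : f ∈ MPHset L) : IsLowerSet (pre0 f) := by
  intro x y hyx hx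
  have h := (pairMap_eq_false_iff hf.1.isSeparatingPair_closure.disjoint).2
    ((lowerClosure (pre0 f)).lower hyx (subset_lowerClosure hx))
  rwa [MPHset.pairMap_closure_eq hf] at h

theorem MPHset.isUpperSet_pre1 (hf : f ∈ MPHset L) : IsUpperSet (pre1 f) := by
  intro x y hxy hx
  have h := (pairMap_eq_true_iff (I := lowerClosure (pre0 f))).2
    ((upperClosure (pre1 f)).upper hxy (subset_upperClosure hx))
  rwa [MPHset.pairMap_closure_eq hf] at h

theorem MPHset.exists_eq_true_of_ne_false (hf : f ∈ MPHset L) {a : L} (ha : f a ≠ some false) :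
    ∃ g ∈ MPHset L, g a = some true ∧ le2 f g := by
  have hsep : IsSeparatingPair (Set.Ici a) (lowerClosure (pre0 f) : Set L) :=
    ⟨isLatFilter_Ici a, hf.1.isSeparatingPair_closure.ideal,
      Set.disjoint_left.2 fun _ hax ⟨_, hv, hxv⟩ =>
        ha (MPHset.isLowerSet_pre0 hf (hax.trans hxv) hv)⟩
  obtain ⟨G, J, haG, hJ, hmax⟩ := hsep.exists_maximal
  exact ⟨pairMap G J, pairMap_mem_MPHset hmax, pairMap_eq_true_iff.2 (haG le_rfl),
    fun x hx => (pairMap_eq_false_iff hmax.prop.disjoint).2 (hJ (subset_lowerClosure hx))⟩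

theorem MPHset.exists_eq_false_of_ne_true (hf : f ∈ MPHset L) {a : L} (ha : f a ≠ some true) :
    ∃ g ∈ MPHset L, g a = some false ∧ le1 f g := by
  have hsep : IsSeparatingPair (upperClosure (pre1 f) : Set L) (Set.Iic a) :=
    ⟨hf.1.isSeparatingPair_closure.filter, isLatIdeal_Iic a,
      Set.disjoint_left.2 fun _ ⟨_, hu, hux⟩ hxa =>
        ha (MPHset.isUpperSet_pre1 hf (hux.trans hxa) hu)⟩
  obtain ⟨G, J, hG, haJ, hmax⟩ := hsep.exists_maximal
  exact ⟨pairMap G J, pairMap_mem_MPHset hmax, (pairMap_eq_false_iff hmax.prop.disjoint).2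
    (haJ le_rfl), fun x hx => pairMap_eq_true_iff.2 (hG (subset_upperClosure hx))⟩

end BoundedLattice

/-- Let `L` be a bounded lattice, `X = D♭(L)`,
`φ ∈ MPE(X,2)` and `a ∈ L`. Then (i) if `φ⁻¹(0) ∩ W_a = ∅` then
`φ⁻¹(0) ⊆ V_a`; (ii) if `φ⁻¹(1) ∩ V_a = ∅` then `φ⁻¹(1) ⊆ W_a`. -/
theorem stmt_8 (L : Type*) [Lattice L] [BoundedOrder L]
    (φ : PMap (MPHsub L)) (hφ : φ ∈ MPE (EM L)) (a : L) :
    (pre0 φ ∩ WaM L a = ∅ → pre0 φ ⊆ VaM L a) ∧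
    (pre1 φ ∩ VaM L a = ∅ → pre1 φ ⊆ WaM L a) := by
  refine ⟨fun hW f hf => ?_, fun hV f hf => ?_⟩
  · by_contra hfa
    obtain ⟨g, hg, hga, hfg⟩ := MPHset.exists_eq_true_of_ne_false f.2 hfa
    have hφg : φ ⟨g, hg⟩ = some false :=
      MPE.eq_false_of_forall_rel hφ hf ((ErelP.refl g).of_le2 hfg) fun z hz => hz.of_le2 hfg
    exact Set.eq_empty_iff_forall_notMem.1 hW ⟨g, hg⟩ ⟨hφg, hga⟩
  · by_contra hfa
    obtain ⟨g, hg, hga, hfg⟩ := MPHset.exists_eq_false_of_ne_true f.2 hfa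
    have hφg : φ ⟨g, hg⟩ = some true :=
      MPE.eq_true_of_forall_rel hφ hf ((ErelP.refl g).of_le1 hfg) fun z hz => hz.of_le1 hfg
    exact Set.eq_empty_iff_forall_notMem.1 hV ⟨g, hg⟩ ⟨hφg, hga⟩

end CanExt
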